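/- In any algebra (S,*,') satisfying the three axioms, the binary operation is associative: (x * y) * z = x * (y * z) for all x, y, z in S. -/

import Mathlib

/-!
By (E3) the only obstruction to associativity is the double prime: `x * z'' = x * z` for all
`x`, `z` suffices. Since every element is a product `x = (x * x') * x`, (E3) reduces this further to
`z''' = z'`. The elements `z' * z` are idempotent, and commuting them past each other with (E2)
gives `(z' * z) * z''' = z'''`, from which `z''' = z'` follows.
-/

section PrimeAlgebra

variable {S : Type*} {m : S → S → S} {i : S → S}

local infixl:70 " ⋆ " => m
local postfix:max "′" => i

theorem mul_ii_mul_i_mul (E1 : ∀ x, x ⋆ x′ ⋆ x = x) (E3 : ∀ x y z, x ⋆ y ⋆ z = x ⋆ (y ⋆ z′′))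
    (x z : S) : x ⋆ z′′ ⋆ z′ ⋆ z = x ⋆ z′′ := by
  rw [E3 x z′′ z′, E3 x (z′′ ⋆ z′′′) z, E1 z′′]

theorem i_mul_ii (E1 : ∀ x, x ⋆ x′ ⋆ x = x) (E3 : ∀ x y z, x ⋆ y ⋆ z = x ⋆ (y ⋆ z′′)) (z : S) :
    z′ ⋆ z′′ = z′ ⋆ z := by
  rw [← mul_ii_mul_i_mul E1 E3 z′ z, E1 z′]

theorem ii_mul_i_mul (E1 : ∀ x, x ⋆ x′ ⋆ x = x) (E3 : ∀ x y z, x ⋆ y ⋆ z = x ⋆ (y ⋆ z′′))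
    (z : S) : z′′ ⋆ z′ ⋆ z = z′′ := by
  simpa only [E1] using mul_ii_mul_i_mul E1 E3 (z′′ ⋆ z′′′) z

theorem mul_i_mul (E1 : ∀ x, x ⋆ x′ ⋆ x = x) (E3 : ∀ x y z, x ⋆ y ⋆ z = x ⋆ (y ⋆ z′′))
    (u w : S) : u ⋆ w′ ⋆ w = u ⋆ (w′ ⋆ w) := by
  rw [E3, i_mul_ii E1 E3]

theorem i_mul_self_mul_i (E1 : ∀ x, x ⋆ x′ ⋆ x = x) (E3 : ∀ x y z, x ⋆ y ⋆ z = x ⋆ (y ⋆ z′′))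
    (z : S) : z′ ⋆ z ⋆ z′ = z′ := by
  rw [← i_mul_ii E1 E3, E1]

theorem i_mul_self_idem (E1 : ∀ x, x ⋆ x′ ⋆ x = x) (E3 : ∀ x y z, x ⋆ y ⋆ z = x ⋆ (y ⋆ z′′))
    (w : S) : w′ ⋆ w ⋆ (w′ ⋆ w) = w′ ⋆ w := by
  rw [← mul_i_mul E1 E3, i_mul_self_mul_i E1 E3]

theorem iii_mul_ii (E1 : ∀ x, x ⋆ x′ ⋆ x = x) (E3 : ∀ x y z, x ⋆ y ⋆ z = x ⋆ (y ⋆ z′′))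
    (z : S) : z′′′ ⋆ z′′ = z′′′ ⋆ z := by
  have h := mul_ii_mul_i_mul E1 E3 z′′′ z
  rw [ii_mul_i_mul E1 E3 z′] at h
  exact h.symm

theorem iii_mul_self_mul_i (E1 : ∀ x, x ⋆ x′ ⋆ x = x)
    (E3 : ∀ x y z, x ⋆ y ⋆ z = x ⋆ (y ⋆ z′′)) (z : S) : z′′′ ⋆ z ⋆ z′ = z′′′ := by
  rw [← iii_mul_ii E1 E3, ii_mul_i_mul E1 E3]

theorem mul_iii_mul_mul_i (E1 : ∀ x, x ⋆ x′ ⋆ x = x)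
    (E3 : ∀ x y z, x ⋆ y ⋆ z = x ⋆ (y ⋆ z′′)) (u z : S) : u ⋆ z′′′ ⋆ z ⋆ z′ = u ⋆ z′′′ := by
  rw [E3 u z′′′ z, E3, i_mul_self_mul_i E1 E3 z′′]

theorem i_mul_self_mul_iii_mul (E1 : ∀ x, x ⋆ x′ ⋆ x = x)
    (E2 : ∀ x y, x ⋆ x′ ⋆ (y′ ⋆ y) = y′ ⋆ y ⋆ (x ⋆ x′))
    (E3 : ∀ x y z, x ⋆ y ⋆ z = x ⋆ (y ⋆ z′′)) (z : S) : z′ ⋆ z ⋆ z′′′ ⋆ z = z′′′ ⋆ z := by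
  have hcomm : z′ ⋆ z ⋆ (z′′′ ⋆ z) = z′′′ ⋆ z ⋆ (z′ ⋆ z) := by
    simpa only [i_mul_ii E1 E3, iii_mul_ii E1 E3] using E2 z′ z′′
  calc z′ ⋆ z ⋆ z′′′ ⋆ z = z′ ⋆ z ⋆ (z′′′ ⋆ z′′) := E3 _ _ _
    _ = z′′′ ⋆ z ⋆ (z′ ⋆ z) := by rw [iii_mul_ii E1 E3, hcomm]
    _ = z′′′ ⋆ z := by rw [← mul_i_mul E1 E3, iii_mul_self_mul_i E1 E3]

theorem i_mul_self_mul_iii (E1 : ∀ x, x ⋆ x′ ⋆ x = x)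
    (E2 : ∀ x y, x ⋆ x′ ⋆ (y′ ⋆ y) = y′ ⋆ y ⋆ (x ⋆ x′))
    (E3 : ∀ x y z, x ⋆ y ⋆ z = x ⋆ (y ⋆ z′′)) (z : S) : z′ ⋆ z ⋆ z′′′ = z′′′ := by
  calc z′ ⋆ z ⋆ z′′′ = z′ ⋆ z ⋆ z′′′ ⋆ z ⋆ z′ := (mul_iii_mul_mul_i E1 E3 _ z).symm
    _ = z′′′ := by rw [i_mul_self_mul_iii_mul E1 E2 E3, iii_mul_self_mul_i E1 E3]

theorem iii_eq_i (E1 : ∀ x, x ⋆ x′ ⋆ x = x)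
    (E2 : ∀ x y, x ⋆ x′ ⋆ (y′ ⋆ y) = y′ ⋆ y ⋆ (x ⋆ x′))
    (E3 : ∀ x y z, x ⋆ y ⋆ z = x ⋆ (y ⋆ z′′)) (z : S) : z′′′ = z′ := by
  calc z′′′ = z′ ⋆ z ⋆ (z′ ⋆ z ⋆ z′′′) := by simp only [i_mul_self_mul_iii E1 E2 E3]
    _ = z′ := by rw [← E3, i_mul_self_idem E1 E3, i_mul_self_mul_i E1 E3]

theorem mul_ii (E1 : ∀ x, x ⋆ x′ ⋆ x = x)
    (E2 : ∀ x y, x ⋆ x′ ⋆ (y′ ⋆ y) = y′ ⋆ y ⋆ (x ⋆ x′))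
    (E3 : ∀ x y z, x ⋆ y ⋆ z = x ⋆ (y ⋆ z′′)) (x z : S) : x ⋆ z′′ = x ⋆ z := by
  rw [← E1 x, E3 _ x z′′, E3 _ x z, iii_eq_i E1 E2 E3 z′]

end PrimeAlgebra

theorem stmt (S : Type*) (m : S → S → S) (i : S → S)
    (E1 : ∀ x, m (m x (i x)) x = x)
    (E2 : ∀ x y, m (m x (i x)) (m (i y) y) = m (m (i y) y) (m x (i x)))
    (E3 : ∀ x y z, m (m x y) z = m x (m y (i (i z)))) :
    ∀ x y z, m (m x y) z = m x (m y z) := by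
  intro x y z
  rw [E3, mul_ii E1 E2 E3]
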